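/- arXiv:2301.10060 — 2 statements merged into one kernel-verified Lean document; each statement's English description precedes it below -/
import Mathlib

section
/- Let n be a natural number, let J be a real n×n skew-symmetric matrix, and let R and Q be real n×n positive definite matrices. Then every eigenvalue μ of the matrix A = (J − R)Q (i.e., every μ in the spectrum over ℂ of the complexification of A) satisfies Re(μ) < 0; that is, A is a Hurwitz (asymptotically stable) matrix. -/
/-!
Let `A v = μ v` with `v ≠ 0` and put `x = Q v`. Since `Q` is symmetric,
`x* (J - R) x = x* A v = μ (v* Q v)`, where `v* Q v` is real and positive. The skew part `J`
contributes nothing to the real part of `x* (J - R) x`, which is therefore `-Re (x* R x) < 0`;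
hence `Re μ < 0`.
-/

open Matrix

namespace Matrix

variable {ι : Type*} [Fintype ι]

theorem exists_mulVec_eq_smul_of_mem_spectrum {K : Type*} [Field K] [DecidableEq ι]
    {A : Matrix ι ι K} {μ : K} (hμ : μ ∈ spectrum K A) :
    ∃ v : ι → K, v ≠ 0 ∧ A *ᵥ v = μ • v := by
  rw [← spectrum_toLin', ← Module.End.hasEigenvalue_iff_mem_spectrum] at hμ
  obtain ⟨v, hv_mem, hv_ne⟩ := hμ.exists_hasEigenvector
  exact ⟨v, hv_ne, by simpa using Module.End.mem_eigenspace_iff.mp hv_mem⟩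

theorem re_lt_zero_of_mem_spectrum_mul {𝕜 : Type*} [RCLike 𝕜] [DecidableEq ι]
    {S Q : Matrix ι ι 𝕜} (hQ : Q.IsHermitian)
    (hQ_pos : ∀ x : ι → 𝕜, x ≠ 0 → 0 < RCLike.re (star x ⬝ᵥ Q *ᵥ x))
    (hS_neg : ∀ x : ι → 𝕜, x ≠ 0 → RCLike.re (star x ⬝ᵥ S *ᵥ x) < 0)
    {μ : 𝕜} (hμ : μ ∈ spectrum 𝕜 (S * Q)) : RCLike.re μ < 0 := by
  obtain ⟨v, hv_ne, hv⟩ := exists_mulVec_eq_smul_of_mem_spectrum hμ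
  set c := star v ⬝ᵥ Q *ᵥ v
  have hc_pos : 0 < RCLike.re c := hQ_pos v hv_ne
  have hc_im : RCLike.im c = 0 := hQ.im_star_dotProduct_mulVec_self v
  have hx : star (Q *ᵥ v) ⬝ᵥ v = c := by
    rw [star_mulVec, hQ.eq, ← dotProduct_mulVec]
  have hx_ne : Q *ᵥ v ≠ 0 := by
    rintro h
    rw [h, star_zero, zero_dotProduct] at hx
    simp [← hx] at hc_pos
  have hSx : star (Q *ᵥ v) ⬝ᵥ S *ᵥ (Q *ᵥ v) = μ * c := by
    rw [mulVec_mulVec, hv, dotProduct_smul, hx, smul_eq_mul]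
  have h := hS_neg _ hx_ne
  rw [hSx, RCLike.mul_re, hc_im, mul_zero, sub_zero] at h
  exact neg_of_mul_neg_left h hc_pos.le

theorem dotProduct_mulVec_self_eq_zero_of_transpose_eq_neg {R : Type*} [CommRing R]
    [NoZeroDivisors R] [CharZero R] {J : Matrix ι ι R} (hJ : Jᵀ = -J) (w : ι → R) :
    w ⬝ᵥ J *ᵥ w = 0 := by
  have h : w ⬝ᵥ J *ᵥ w = -(w ⬝ᵥ J *ᵥ w) := by
    rw [← dotProduct_neg, ← neg_mulVec, ← hJ, mulVec_transpose, dotProduct_mulVec, dotProduct_comm]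
  exact self_eq_neg.mp h

theorem re_star_dotProduct_map_ofReal_mulVec (M : Matrix ι ι ℝ) (x : ι → ℂ) :
    (star x ⬝ᵥ M.map ((↑) : ℝ → ℂ) *ᵥ x).re =
      (fun i ↦ (x i).re) ⬝ᵥ M *ᵥ (fun i ↦ (x i).re) +
        (fun i ↦ (x i).im) ⬝ᵥ M *ᵥ (fun i ↦ (x i).im) := by
  simp only [dotProduct, mulVec, map_apply, Pi.star_apply, Finset.mul_sum, Complex.re_sum,
    ← Finset.sum_add_distrib]
  refine Finset.sum_congr rfl fun i _ ↦ Finset.sum_congr rfl fun j _ ↦ ?_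
  simp only [Complex.mul_re, Complex.mul_im, Complex.star_def, Complex.conj_re, Complex.conj_im,
    Complex.ofReal_re, Complex.ofReal_im]
  ring

theorem re_star_dotProduct_map_ofReal_mulVec_pos {M : Matrix ι ι ℝ}
    (hM : ∀ v : ι → ℝ, v ≠ 0 → 0 < v ⬝ᵥ M *ᵥ v) {x : ι → ℂ} (hx : x ≠ 0) :
    0 < (star x ⬝ᵥ M.map ((↑) : ℝ → ℂ) *ᵥ x).re := by
  have hM' (v : ι → ℝ) : 0 ≤ v ⬝ᵥ M *ᵥ v := by
    rcases eq_or_ne v 0 with rfl | hv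
    · simp
    · exact (hM v hv).le
  rw [re_star_dotProduct_map_ofReal_mulVec]
  by_cases hre : (fun i ↦ (x i).re) = 0
  · have him : (fun i ↦ (x i).im) ≠ 0 := fun him ↦
      hx (funext fun i ↦ Complex.ext (congrFun hre i) (congrFun him i))
    exact add_pos_of_nonneg_of_pos (hM' _) (hM _ him)
  · exact add_pos_of_pos_of_nonneg (hM _ hre) (hM' _)

theorem re_star_dotProduct_map_ofReal_mulVec_eq_zero {J : Matrix ι ι ℝ} (hJ : Jᵀ = -J)
    (x : ι → ℂ) : (star x ⬝ᵥ J.map ((↑) : ℝ → ℂ) *ᵥ x).re = 0 := by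
  simp only [re_star_dotProduct_map_ofReal_mulVec,
    dotProduct_mulVec_self_eq_zero_of_transpose_eq_neg hJ, add_zero]

end Matrix

theorem eigenvalues_re_neg_general (n : ℕ) (J R Q A : Matrix (Fin n) (Fin n) ℝ)
    (hJ : Jᵀ = -J)
    (hRpd : ∀ v : Fin n → ℝ, v ≠ 0 → 0 < v ⬝ᵥ (R *ᵥ v))
    (hQsym : Qᵀ = Q) (hQpd : ∀ v : Fin n → ℝ, v ≠ 0 → 0 < v ⬝ᵥ (Q *ᵥ v))
    (hA : A = (J - R) * Q) :
    ∀ μ ∈ spectrum ℂ (A.map ((↑) : ℝ → ℂ)), μ.re < 0 := by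
  intro μ hμ
  have hA' : A.map ((↑) : ℝ → ℂ) = (J.map (↑) - R.map (↑)) * Q.map (↑) := by
    rw [hA, ← Matrix.map_sub _ Complex.ofReal_sub J R]
    exact Matrix.map_mul (f := Complex.ofRealHom)
  have hQ : (Q.map ((↑) : ℝ → ℂ)).IsHermitian :=
    (isHermitian_iff_isSymm.mpr hQsym).map _ fun _ ↦ by simp
  have hS_neg (x : Fin n → ℂ) (hx : x ≠ 0) :
      RCLike.re (star x ⬝ᵥ (J.map (↑) - R.map (↑)) *ᵥ x) < 0 := by
    rw [sub_mulVec, dotProduct_sub, RCLike.re_to_complex, Complex.sub_re,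
      re_star_dotProduct_map_ofReal_mulVec_eq_zero hJ, zero_sub, neg_neg_iff_pos]
    exact re_star_dotProduct_map_ofReal_mulVec_pos hRpd hx
  rw [hA'] at hμ
  exact re_lt_zero_of_mem_spectrum_mul hQ
    (fun _ hx ↦ re_star_dotProduct_map_ofReal_mulVec_pos hQpd hx) hS_neg hμ

/-- For `A = (J - R) Q` with `J` skew-symmetric and `R`, `Q` positive definite,
every eigenvalue of (the complexification of) `A` has strictly negative real part,
i.e. `A` is Hurwitz. -/
theorem eigenvalues_re_neg (n : ℕ) (J R Q A : Matrix (Fin n) (Fin n) ℝ)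
    (hJ : Jᵀ = -J)
    (hRsym : Rᵀ = R) (hRpd : ∀ v : Fin n → ℝ, v ≠ 0 → 0 < v ⬝ᵥ (R *ᵥ v))
    (hQsym : Qᵀ = Q) (hQpd : ∀ v : Fin n → ℝ, v ≠ 0 → 0 < v ⬝ᵥ (Q *ᵥ v))
    (hA : A = (J - R) * Q) :
    ∀ μ ∈ spectrum ℂ (A.map ((↑) : ℝ → ℂ)), μ.re < 0 :=
  eigenvalues_re_neg_general n J R Q A hJ hRpd hQsym hQpd hA
end

section
/- Let n be a natural number, let J̄, R̄, Q̄ be arbitrary real n×n matrices, and set A = (J̄ − J̄ᵀ − R̄R̄ᵀ)·(Q̄Q̄ᵀ). Let x : ℝ → ℝⁿ satisfy x' (t) = A x(t) at every t ∈ ℝ. Then the function V(t) = (1/2)·x(t)ᵀ(Q̄Q̄ᵀ) x(t) is antitone (nonincreasing) on ℝ. -/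
/-!
With `Q = Q̄ Q̄ᵀ` symmetric and `y = Q x`, the derivative of `V` is `yᵀ (J̄ - J̄ᵀ - R̄ R̄ᵀ) y`:
the skew-symmetric part `J̄ - J̄ᵀ` contributes nothing and the rest is `-|R̄ᵀ y|² ≤ 0`.
-/

open Matrix

section Derivatives

variable {𝕜 m : Type*} [NontriviallyNormedField 𝕜] [Fintype m] {u v : 𝕜 → m → 𝕜} {u' v' : m → 𝕜}
  {t : 𝕜}

theorem HasDerivAt.dotProduct (hu : HasDerivAt u u' t) (hv : HasDerivAt v v' t) :
    HasDerivAt (fun s => u s ⬝ᵥ v s) (u' ⬝ᵥ v t + u t ⬝ᵥ v') t := by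
  show HasDerivAt (fun s => ∑ i, u s i * v s i) (∑ i, u' i * v t i + ∑ i, u t i * v' i) t
  rw [← Finset.sum_add_distrib]
  exact HasDerivAt.fun_sum fun i _ => (hasDerivAt_pi.1 hu i).mul (hasDerivAt_pi.1 hv i)

theorem HasDerivAt.mulVec (Q : Matrix m m 𝕜) (hu : HasDerivAt u u' t) :
    HasDerivAt (fun s => Q *ᵥ u s) (Q *ᵥ u') t :=
  hasDerivAt_pi.2 fun i => HasDerivAt.fun_sum fun j _ => (hasDerivAt_pi.1 hu j).const_mul (Q i j)

theorem HasDerivAt.dotProduct_mulVec_self {Q : Matrix m m 𝕜} (hQ : Q.IsSymm)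
    (hu : HasDerivAt u u' t) :
    HasDerivAt (fun s => u s ⬝ᵥ (Q *ᵥ u s)) (2 * (Q *ᵥ u t ⬝ᵥ u')) t := by
  convert hu.dotProduct (hu.mulVec Q) using 1
  rw [dotProduct_comm u', dotProduct_mulVec (u t), ← mulVec_transpose, hQ.eq, two_mul]

end Derivatives

section Dissipation

variable {m k R : Type*} [Fintype m] [Fintype k] [CommRing R]

theorem Matrix.dotProduct_mulVec_sub_transpose_self (J : Matrix m m R) (y : m → R) :
    y ⬝ᵥ ((J - Jᵀ) *ᵥ y) = 0 := by
  rw [sub_mulVec, dotProduct_sub, mulVec_transpose, dotProduct_comm y (y ᵥ* J), ← dotProduct_mulVec,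
    sub_self]

theorem Matrix.dotProduct_mulVec_mul_transpose_self_nonneg [LinearOrder R] [IsStrictOrderedRing R]
    (B : Matrix m k R) (y : m → R) : 0 ≤ y ⬝ᵥ ((B * Bᵀ) *ᵥ y) := by
  rw [← mulVec_mulVec, dotProduct_mulVec, ← mulVec_transpose]
  exact Fintype.sum_nonneg fun i => mul_self_nonneg _

theorem Matrix.dotProduct_mulVec_sub_transpose_sub_mul_transpose_nonpos [LinearOrder R]
    [IsStrictOrderedRing R] (J : Matrix m m R) (B : Matrix m k R) (y : m → R) :
    y ⬝ᵥ ((J - Jᵀ - B * Bᵀ) *ᵥ y) ≤ 0 := by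
  rw [sub_mulVec, dotProduct_sub, dotProduct_mulVec_sub_transpose_self, zero_sub, neg_nonpos]
  exact dotProduct_mulVec_mul_transpose_self_nonneg B y

end Dissipation

/-- For `A = (J̄ - J̄ᵀ - R̄ R̄ᵀ)(Q̄ Q̄ᵀ)` with arbitrary `J̄, R̄, Q̄`, along any global
solution of `x' = A x` the function `V(t) = (1/2) x(t)ᵀ (Q̄ Q̄ᵀ) x(t)` is
nonincreasing. -/
theorem unconstrained_lyapunov_antitone (n : ℕ)
    (Jb Rb Qb A : Matrix (Fin n) (Fin n) ℝ)
    (hA : A = (Jb - Jbᵀ - Rb * Rbᵀ) * (Qb * Qbᵀ))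
    (x : ℝ → (Fin n → ℝ))
    (hx : ∀ t : ℝ, HasDerivAt x (A *ᵥ x t) t) :
    Antitone (fun t => (1 / 2 : ℝ) * (x t ⬝ᵥ ((Qb * Qbᵀ) *ᵥ x t))) := by
  have hV := fun t => ((hx t).dotProduct_mulVec_self (isSymm_mul_transpose_self Qb)).const_mul
    (1 / 2 : ℝ)
  refine antitone_of_hasDerivAt_nonpos hV fun t => ?_
  have hdiss := dotProduct_mulVec_sub_transpose_sub_mul_transpose_nonpos Jb Rb ((Qb * Qbᵀ) *ᵥ x t)
  show (1 / 2 : ℝ) * (2 * ((Qb * Qbᵀ) *ᵥ x t ⬝ᵥ A *ᵥ x t)) ≤ 0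
  rw [hA, ← mulVec_mulVec (x t) (Jb - Jbᵀ - Rb * Rbᵀ)]
  linarith
end
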